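/- arXiv:2007.03895 — 2 statements merged into one kernel-verified Lean document; each statement's English description precedes it below -/
import Mathlib

section
/- (Davis–Sherman inequality with f(0)=0) Let f be an operator convex function on an interval containing 0 with f(0)=0, P an orthogonal projection, and A a self-adjoint operator. Then f(PAP) ≤ P f(A) P as quadratic forms. -/
/-!
With the self-adjoint unitary `u = 2p - 1`, the midpoint of `a` and `u a u` is the pinching
`p a p + (1 - p) a (1 - p)`, which commutes with `p` and satisfies `pinching p a * p = p a p`.
Operator convexity at `t = 1/2` together with `f(u a u) = u f(a) u` gives
`f(pinching p a) ≤ pinching p (f a)`, and compressing by `p` yields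
`p f(pinching p a) p ≤ p f(a) p`.
It remains to see `f(p a p) = f(pinching p a) p`, an instance of `f(b p) = f(b) p` for `b`
commuting with `p` and `f 0 = 0`: this holds for polynomials without constant term, hence for
continuous `f` by Weierstrass approximation. Continuity of `f`
comes from its scalar convexity, i.e. operator convexity tested on multiples of `1`.
-/

open Polynomial Set

theorem Polynomial.aeval_mul_of_isIdempotentElem {S R : Type*} [CommSemiring S] [Ring R]
    [Algebra S R] {a p : R} (hp : IsIdempotentElem p) (hap : Commute a p) (q : S[X]) :
    aeval (a * p) q = aeval a q * p + q.coeff 0 • (1 - p) := by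
  induction q using Polynomial.induction_on with
  | C r => simp [Algebra.algebraMap_eq_smul_one, smul_sub]
  | add q₁ q₂ h₁ h₂ =>
    simp only [map_add, h₁, h₂, coeff_add, add_smul, add_mul]
    abel
  | monomial n r _ =>
    simp only [map_mul, map_pow, aeval_C, aeval_X, coeff_C_mul, coeff_X_pow]
    rw [hap.mul_pow, hp.pow_succ_eq]
    simp [Algebra.algebraMap_eq_smul_one, (hap.pow_left (n + 1)).eq]

theorem exists_polynomial_near_of_continuousOn_of_map_zero {a b : ℝ} {f : ℝ → ℝ}
    (hf : ContinuousOn f (Icc a b)) (hf0 : f 0 = 0) (h0 : (0 : ℝ) ∈ Icc a b) {ε : ℝ}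
    (hε : 0 < ε) :
    ∃ q : ℝ[X], q.coeff 0 = 0 ∧ ∀ x ∈ Icc a b, |f x - q.eval x| < ε := by
  obtain ⟨q, hq⟩ := exists_polynomial_near_of_continuousOn a b f hf (ε / 2) (half_pos hε)
  refine ⟨q - C (q.eval 0), by simp [coeff_zero_eq_eval_zero], fun x hx => ?_⟩
  have hq0 := hq 0 h0
  rw [hf0, sub_zero] at hq0
  calc |f x - (q - C (q.eval 0)).eval x| = |(f x - q.eval x) + q.eval 0| := by
        simp only [eval_sub, eval_C]; ring_nf
    _ ≤ |f x - q.eval x| + |q.eval 0| := abs_add_le _ _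
    _ < ε / 2 + ε / 2 := add_lt_add (by rw [abs_sub_comm]; exact hq x hx) hq0
    _ = ε := add_halves ε

def pinching {R : Type*} [Ring R] (p a : R) : R := p * a * p + (1 - p) * a * (1 - p)

section Pinching

variable {R : Type*} [Ring R] {p : R}

theorem two_inv_smul_add_two_inv_smul_reflection_conj [Algebra ℝ R] (p a : R) :
    (2⁻¹ : ℝ) • a + (2⁻¹ : ℝ) • ((2 * p - 1) * a * (2 * p - 1)) = pinching p a := by
  have h : a + (2 * p - 1) * a * (2 * p - 1) = (2 : ℝ) • pinching p a := by
    rw [two_smul, pinching]; noncomm_ring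
  rw [← smul_add, h, smul_smul, inv_mul_cancel₀ two_ne_zero, one_smul]

theorem IsIdempotentElem.pinching_mul_self (hp : IsIdempotentElem p) (a : R) :
    pinching p a * p = p * a * p := by
  simp only [pinching, add_mul, mul_assoc, hp.eq, sub_mul, one_mul, sub_self, mul_zero, add_zero]

theorem IsIdempotentElem.mul_pinching (hp : IsIdempotentElem p) (a : R) :
    p * pinching p a = p * a * p := by
  simp only [pinching, mul_add, ← mul_assoc, hp.eq, mul_sub, mul_one, sub_self, zero_mul,
    add_zero]

theorem IsIdempotentElem.commute_pinching (hp : IsIdempotentElem p) (a : R) :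
    Commute (pinching p a) p :=
  (hp.pinching_mul_self a).trans (hp.mul_pinching a).symm

theorem IsIdempotentElem.mul_pinching_mul (hp : IsIdempotentElem p) (a : R) :
    p * pinching p a * p = p * a * p := by
  rw [hp.mul_pinching, mul_assoc, hp.eq]

theorem IsSelfAdjoint.pinching [StarRing R] {a : R} (hp : IsSelfAdjoint p)
    (ha : IsSelfAdjoint a) : IsSelfAdjoint (pinching p a) := by
  simp only [_root_.pinching, IsSelfAdjoint, star_add, star_mul, star_sub, star_one, hp.star_eq,
    ha.star_eq, mul_assoc]

end Pinching

section CStarAlgebra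

variable {𝒜 : Type*} [CStarAlgebra 𝒜] {f : ℝ → ℝ}

theorem norm_cfc_sub_aeval_le (hf : Continuous f) {a : 𝒜} (ha : IsSelfAdjoint a)
    (q : ℝ[X]) {ε : ℝ} (hε : 0 ≤ ε)
    (hq : ∀ x ∈ spectrum ℝ a, |f x - q.eval x| ≤ ε) :
    ‖cfc f a - aeval a q‖ ≤ ε := by
  rw [← cfc_polynomial q a, ← cfc_sub f q.eval a]
  exact norm_cfc_le hε hq

theorem cfc_mul_of_isStarProjection (hf : Continuous f) (hf0 : f 0 = 0) {a p : 𝒜}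
    (ha : IsSelfAdjoint a) (hp : IsStarProjection p) (hap : Commute a p) :
    cfc f (a * p) = cfc f a * p := by
  have hap_sa : IsSelfAdjoint (a * p) := (ha.commute_iff hp.isSelfAdjoint).mp hap
  -- the factor `‖1‖` spares a `Nontrivial 𝒜` assumption
  set r := ‖a‖ * ‖(1 : 𝒜)‖
  have hspec {b : 𝒜} (hb : ‖b‖ ≤ ‖a‖) : spectrum ℝ b ⊆ Icc (-r) r := fun x hx =>
    abs_le.mp <| (spectrum.norm_le_norm_mul_of_mem hx).trans
      (mul_le_mul_of_nonneg_right hb (norm_nonneg _))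
  have hap_norm : ‖a * p‖ ≤ ‖a‖ :=
    (norm_mul_le a p).trans (mul_le_of_le_one_right (norm_nonneg a) (hp.norm_le p))
  have hr : 0 ≤ r := by positivity
  refine eq_of_forall_dist_le fun ε hε => ?_
  obtain ⟨q, hq0, hq⟩ := exists_polynomial_near_of_continuousOn_of_map_zero hf.continuousOn hf0
    ⟨neg_nonpos.2 hr, hr⟩ (half_pos hε)
  have hq_ap := norm_cfc_sub_aeval_le hf hap_sa q (half_pos hε).le
    fun x hx => (hq x (hspec hap_norm hx)).le
  have hq_a := norm_cfc_sub_aeval_le hf ha q (half_pos hε).le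
    fun x hx => (hq x (hspec le_rfl hx)).le
  have haeval : aeval (a * p) q = aeval a q * p := by
    simp [aeval_mul_of_isIdempotentElem hp.isIdempotentElem hap, hq0]
  calc dist (cfc f (a * p)) (cfc f a * p)
      = ‖(cfc f (a * p) - aeval (a * p) q) - (cfc f a - aeval a q) * p‖ := by
        rw [dist_eq_norm, haeval]; congr 1; noncomm_ring
    _ ≤ ‖cfc f (a * p) - aeval (a * p) q‖ + ‖cfc f a - aeval a q‖ * ‖p‖ :=
        (norm_sub_le _ _).trans (by gcongr; exact norm_mul_le _ _)
    _ ≤ ε / 2 + ε / 2 * 1 := by gcongr; exact hp.norm_le p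
    _ = ε := by ring

theorem cfc_unitary_conj (hf : Continuous f) {a u : 𝒜} (ha : IsSelfAdjoint a)
    (hu : u ∈ unitary 𝒜) : cfc f (u * a * star u) = u * cfc f a * star u := by
  have hφ : Continuous (Unitary.conjStarAlgAut ℝ 𝒜 ⟨u, hu⟩) := by
    show Continuous fun x : 𝒜 => u * x * star u
    fun_prop
  exact (StarAlgHomClass.map_cfc (Unitary.conjStarAlgAut ℝ 𝒜 ⟨u, hu⟩) f a).symm

def OperatorConvex (𝒜 : Type*) [CStarAlgebra 𝒜] [PartialOrder 𝒜] (f : ℝ → ℝ) :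
    Prop :=
  ∀ X Y : 𝒜, IsSelfAdjoint X → IsSelfAdjoint Y → ∀ t : ℝ, 0 ≤ t → t ≤ 1 →
    cfc f (t • X + (1 - t) • Y) ≤ t • cfc f X + (1 - t) • cfc f Y

section Order

variable [PartialOrder 𝒜]

theorem OperatorConvex.cfc_pinching_le (hf : OperatorConvex 𝒜 f) (hfc : Continuous f)
    {p a : 𝒜} (hp : IsStarProjection p) (ha : IsSelfAdjoint a) :
    cfc f (pinching p a) ≤ pinching p (cfc f a) := by
  have hr : star (2 * p - 1) = 2 * p - 1 := by simp [hp.isSelfAdjoint.star_eq, two_mul]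
  have hconj :
      cfc f ((2 * p - 1) * a * (2 * p - 1)) = (2 * p - 1) * cfc f a * (2 * p - 1) := by
    simpa only [hr] using cfc_unitary_conj hfc ha hp.two_mul_sub_one_mem_unitary
  have hsa : IsSelfAdjoint ((2 * p - 1) * a * (2 * p - 1)) := by
    simpa only [hr] using ha.conjugate' (2 * p - 1)
  have := hf a _ ha hsa 2⁻¹ (by norm_num) (by norm_num)
  rwa [show (1 : ℝ) - 2⁻¹ = 2⁻¹ by norm_num, two_inv_smul_add_two_inv_smul_reflection_conj,
    hconj, two_inv_smul_add_two_inv_smul_reflection_conj] at this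

variable [StarOrderedRing 𝒜]

theorem OperatorConvex.convexOn [Nontrivial 𝒜] (hf : OperatorConvex 𝒜 f) :
    ConvexOn ℝ univ f := by
  refine ⟨convex_univ, fun x _ y _ s t hs ht hst => ?_⟩
  obtain rfl : t = 1 - s := by linarith
  have := hf _ _ (.algebraMap 𝒜 (.all x)) (.algebraMap 𝒜 (.all y)) s hs (by linarith)
  simpa only [cfc_algebraMap, Algebra.smul_def, ← map_mul, ← map_add, algebraMap_le_algebraMap,
    Algebra.algebraMap_self, RingHom.id_apply] using this

theorem OperatorConvex.continuous [Nontrivial 𝒜] (hf : OperatorConvex 𝒜 f) : Continuous f :=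
  continuousOn_univ.mp (hf.convexOn.continuousOn isOpen_univ)

theorem OperatorConvex.cfc_projection_conj_le (hf : OperatorConvex 𝒜 f) (hf0 : f 0 = 0)
    {p a : 𝒜} (hp : IsStarProjection p) (ha : IsSelfAdjoint a) :
    cfc f (p * a * p) ≤ p * cfc f a * p := by
  obtain _ | _ := subsingleton_or_nontrivial 𝒜
  · exact (Subsingleton.elim _ _).le
  have hfc := hf.continuous
  have hc := hp.isIdempotentElem.commute_pinching a
  calc cfc f (p * a * p) = cfc f (pinching p a) * p := by
        rw [← hp.isIdempotentElem.pinching_mul_self,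
          cfc_mul_of_isStarProjection hfc hf0 (hp.isSelfAdjoint.pinching ha) hp hc]
    _ = p * cfc f (pinching p a) * p := by
        rw [← (hc.cfc_real f).eq, mul_assoc, hp.isIdempotentElem.eq]
    _ ≤ p * pinching p (cfc f a) * p := by
        simpa only [hp.isSelfAdjoint.star_eq] using
          star_left_conjugate_le_conjugate (hf.cfc_pinching_le hfc hp ha) p
    _ = p * cfc f a * p := hp.isIdempotentElem.mul_pinching_mul _

end Order

end CStarAlgebra

/-- **Davis–Sherman inequality.** If `f` is operator convex with `f 0 = 0`, `P` is an
orthogonal projection and `A` is a (bounded) self-adjoint operator on a complex Hilbert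
space, then `f(PAP) ≤ P f(A) P`. Operator convexity is expressed via the continuous
functional calculus. -/
theorem davis_sherman
    {H : Type*} [NormedAddCommGroup H] [InnerProductSpace ℂ H] [CompleteSpace H]
    (f : ℝ → ℝ) (hf0 : f 0 = 0)
    (hconv : ∀ (X Y : H →L[ℂ] H), IsSelfAdjoint X → IsSelfAdjoint Y →
      ∀ t : ℝ, 0 ≤ t → t ≤ 1 →
        cfc f (t • X + (1 - t) • Y) ≤ t • cfc f X + (1 - t) • cfc f Y)
    (P A : H →L[ℂ] H) (hP : IsIdempotentElem P) (hPsa : IsSelfAdjoint P)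
    (hA : IsSelfAdjoint A) :
    cfc f (P * A * P) ≤ P * cfc f A * P :=
  OperatorConvex.cfc_projection_conj_le hconv hf0 ⟨hP, hPsa⟩ hA
end

section
/- (Inclusions of test function spaces) For 1/2 ≤ s' < s and δ ∈ [0, 2s-1]: (i) K_{s'}^{(0)} ⊆ K_s^{(0)}; (ii) K_{s,δ} ⊆ K_{s,0} ⊆ K_s^{(0)}; (iii) if additionally 1/2 < 2s/3 + 1/6 ≤ s' < s then K_{s',4(s-s')} ⊆ K_{s,0}. -/
open MeasureTheory ENNReal

/-- The norm of the test function space `K_s^{(0)}`. -/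
noncomputable def K0norm (s : ℝ) (W : ℝ → ℝ) : ℝ≥0∞ :=
  (∫⁻ r in Set.Ioc (0 : ℝ) 1, ENNReal.ofReal (r ^ (2 * s - 1) * |W r|)) +
    ∫⁻ r in Set.Ioi (1 : ℝ), ENNReal.ofReal |W r|

/-- The norm of the test function space `K_{s,δ}`. -/
noncomputable def Ksdnorm (s δ : ℝ) (W : ℝ → ℝ) : ℝ≥0∞ :=
  ⨆ R ∈ Set.Ici (1 : ℝ),
    ENNReal.ofReal (R ^ δ) *
      ((∫⁻ r in Set.Ioc (0 : ℝ) R, ENNReal.ofReal ((r / R) ^ (2 * s - 1) * |W r|)) +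
        (∫⁻ r in Set.Ioc R (R ^ 2), ENNReal.ofReal ((r / R) ^ (4 * s - 1) * |W r|)) +
        ENNReal.ofReal (R ^ (4 * s - 1)) * ∫⁻ r in Set.Ioi (R ^ 2), ENNReal.ofReal |W r|)

/-- Membership in `K_s^{(0)}`. -/
def MemK0 (s : ℝ) (W : ℝ → ℝ) : Prop :=
  LocallyIntegrableOn W (Set.Ioi 0) ∧ K0norm s W < ⊤

/-- Membership in `K_{s,δ}`. -/
def MemKsd (s δ : ℝ) (W : ℝ → ℝ) : Prop :=
  LocallyIntegrableOn W (Set.Ioi 0) ∧ Ksdnorm s δ W < ⊤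

/-- (i): the `K_s^{(0)}` norm is antitone in `s`. -/
lemma K0norm_mono (s s' : ℝ) (hss : s' ≤ s) (W : ℝ → ℝ) :
    K0norm s W ≤ K0norm s' W := by
  unfold K0norm
  refine add_le_add ?_ le_rfl
  refine setLIntegral_mono' measurableSet_Ioc fun r hr => ?_
  refine ENNReal.ofReal_le_ofReal ?_
  exact mul_le_mul_of_nonneg_right
    (Real.rpow_le_rpow_of_exponent_ge hr.1 hr.2 (by linarith)) (abs_nonneg _)

/-- (ii): the `K_{s,δ}` norm is monotone in `δ`. -/
lemma Ksdnorm_mono_delta (s δ : ℝ) (hδ0 : 0 ≤ δ) (W : ℝ → ℝ) :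
    Ksdnorm s 0 W ≤ Ksdnorm s δ W := by
  unfold Ksdnorm
  refine iSup₂_mono fun R hR => ?_
  refine mul_le_mul_left (ENNReal.ofReal_le_ofReal ?_) _
  exact Real.rpow_le_rpow_of_exponent_le hR hδ0

/-- (iii): `K_{s,0}` norm dominates the `K_s^{(0)}` norm (take `R = 1`). -/
lemma K0norm_le_Ksdnorm (s : ℝ) (W : ℝ → ℝ) :
    K0norm s W ≤ Ksdnorm s 0 W := by
  have h1 : (1 : ℝ) ∈ Set.Ici (1 : ℝ) := Set.mem_Ici.2 le_rfl
  refine le_trans (le_of_eq ?_) (le_biSup _ h1)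
  simp [K0norm, Real.one_rpow, Real.rpow_zero]

/-- (iv): norm comparison for `K_{s',4(s-s')} ⊆ K_{s,0}`. -/
lemma Ksdnorm_le_Ksdnorm (s s' : ℝ) (hss : s' < s) (W : ℝ → ℝ) :
    Ksdnorm s 0 W ≤ Ksdnorm s' (4 * (s - s')) W := by
  unfold Ksdnorm
  refine iSup₂_mono fun R hR => ?_
  have hR0 : (0 : ℝ) < R := lt_of_lt_of_le one_pos hR
  have hc0 : (0 : ℝ) ≤ R ^ (4 * (s - s')) := Real.rpow_nonneg hR0.le _
  have hc1 : (1 : ℝ) ≤ R ^ (4 * (s - s')) := by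
    have := Real.rpow_le_rpow_of_exponent_le hR (show (0:ℝ) ≤ 4 * (s - s') by linarith)
    simpa [Real.rpow_zero] using this
  rw [Real.rpow_zero, ENNReal.ofReal_one, one_mul, mul_add, mul_add]
  refine add_le_add (add_le_add ?_ ?_) ?_
  · -- piece on (0, R]
    rw [← lintegral_const_mul' _ _ ENNReal.ofReal_ne_top]
    refine setLIntegral_mono' measurableSet_Ioc fun r hr => ?_
    rw [← ENNReal.ofReal_mul hc0]
    refine ENNReal.ofReal_le_ofReal ?_
    have h0 : 0 < r / R := div_pos hr.1 hR0
    have h1 : r / R ≤ 1 := (div_le_one hR0).2 hr.2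
    calc (r / R) ^ (2 * s - 1) * |W r|
        ≤ (r / R) ^ (2 * s' - 1) * |W r| :=
          mul_le_mul_of_nonneg_right
            (Real.rpow_le_rpow_of_exponent_ge h0 h1 (by linarith)) (abs_nonneg _)
      _ ≤ R ^ (4 * (s - s')) * ((r / R) ^ (2 * s' - 1) * |W r|) :=
          le_mul_of_one_le_left (by positivity) hc1
  · -- piece on (R, R²]
    rw [← lintegral_const_mul' _ _ ENNReal.ofReal_ne_top]
    refine setLIntegral_mono' measurableSet_Ioc fun r hr => ?_
    rw [← ENNReal.ofReal_mul hc0]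
    refine ENNReal.ofReal_le_ofReal ?_
    have h0 : 0 < r / R := div_pos (lt_trans hR0 hr.1) hR0
    have hrR : r / R ≤ R := by
      rw [div_le_iff₀ hR0]
      calc r ≤ R ^ 2 := hr.2
        _ = R * R := sq R
    rw [← mul_assoc]
    refine mul_le_mul_of_nonneg_right ?_ (abs_nonneg _)
    calc (r / R) ^ (4 * s - 1)
        = (r / R) ^ (4 * (s - s')) * (r / R) ^ (4 * s' - 1) := by
          rw [← Real.rpow_add h0]; congr 1; ring
      _ ≤ R ^ (4 * (s - s')) * (r / R) ^ (4 * s' - 1) :=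
          mul_le_mul_of_nonneg_right
            (Real.rpow_le_rpow h0.le hrR (by linarith)) (Real.rpow_nonneg h0.le _)
  · -- piece on (R², ∞)
    rw [← mul_assoc, ← ENNReal.ofReal_mul hc0, ← Real.rpow_add hR0]
    refine le_of_eq ?_
    congr 2
    ring

/-- **Inclusions of the test function spaces.** For `1/2 ≤ s' < s` and `δ ∈ [0, 2s-1]`:
(i) `K_{s'}^{(0)} ⊆ K_s^{(0)}`; (ii) `K_{s,δ} ⊆ K_{s,0} ⊆ K_s^{(0)}`;
(iii) if moreover `1/2 < 2s/3 + 1/6 ≤ s'`, then `K_{s',4(s-s')} ⊆ K_{s,0}`. -/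
theorem test_space_inclusions (s s' δ : ℝ) (hs' : 1 / 2 ≤ s') (hss : s' < s)
    (hδ0 : 0 ≤ δ) (hδ : δ ≤ 2 * s - 1) :
    (∀ W : ℝ → ℝ, MemK0 s' W → MemK0 s W) ∧
    (∀ W : ℝ → ℝ, MemKsd s δ W → MemKsd s 0 W) ∧
    (∀ W : ℝ → ℝ, MemKsd s 0 W → MemK0 s W) ∧
    (1 / 2 < 2 * s / 3 + 1 / 6 → 2 * s / 3 + 1 / 6 ≤ s' →
      ∀ W : ℝ → ℝ, MemKsd s' (4 * (s - s')) W → MemKsd s 0 W) := by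
  refine ⟨fun W hW => ⟨hW.1, lt_of_le_of_lt (K0norm_mono s s' hss.le W) hW.2⟩,
    fun W hW => ⟨hW.1, lt_of_le_of_lt (Ksdnorm_mono_delta s δ hδ0 W) hW.2⟩,
    fun W hW => ⟨hW.1, lt_of_le_of_lt (K0norm_le_Ksdnorm s W) hW.2⟩,
    fun _ _ W hW => ⟨hW.1, lt_of_le_of_lt (Ksdnorm_le_Ksdnorm s s' hss W) hW.2⟩⟩
end
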